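/- For every vertex v of G with √τ < d_v ≤ ℓ and every i ∈ {1,…,k}, Pr[v ∈ C_i⁺] ≥ p_v/(96·ℓ). -/

import Mathlib

open MeasureTheory Real
open scoped ENNReal

/-- `log* x`: the least `n` such that the `n`-fold iterated natural logarithm of `x` is `≤ 1`. -/
noncomputable def logStar (x : ℝ) : ℕ := sInf {n : ℕ | Real.log^[n] x ≤ 1}

/-- `τ = 1 / (log log log Δ)`. -/
noncomputable def tauOf (Δ : ℕ) : ℝ := 1 / Real.log (Real.log (Real.log Δ))

/-- `ℓ = (log*(1/τ))^{1/100}`. -/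
noncomputable def ellOf (Δ : ℕ) : ℝ := (logStar (1 / tauOf Δ) : ℝ) ^ ((1 : ℝ) / 100)

/-- `β = log*(1/τ) / ℓ`. -/
noncomputable def betaOf (Δ : ℕ) : ℝ := (logStar (1 / tauOf Δ) : ℝ) / ellOf Δ

/-- `k = ⌊log*(1/τ) / 100⌋`. -/
noncomputable def kOf (Δ : ℕ) : ℕ := logStar (1 / tauOf Δ) / 100

/-- Auxiliary sequence: `aw 0 = 10β`, `aw (n+1) = exp (ℓ · aw n) / (16ℓ)`. -/
noncomputable def aw (Δ : ℕ) : ℕ → ℝ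
  | 0 => 10 * betaOf Δ
  | n + 1 => Real.exp (ellOf Δ * aw Δ n) / (16 * ellOf Δ)

/-- Paper-indexed sequence `a_i`: `awP Δ 1 = 10β` and `awP Δ (i+1) = exp (ℓ·awP Δ i)/(16ℓ)`
for `i ≥ 1`. -/
noncomputable def awP (Δ i : ℕ) : ℝ := aw Δ (i - 1)

/-- `d_v = Σ_{u ∼ v} p_u`, the total desire in the neighborhood of `v`. -/
noncomputable def dW {V : Type*} [Fintype V] (G : SimpleGraph V) [DecidableRel G.Adj]
    (p : V → ℝ) (v : V) : ℝ :=
  ∑ u ∈ G.neighborFinset v, p u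

/-- `v ∈ C⁻`: `d_v ≤ √τ` and `r_v ≤ β·p_v`. -/
def CminusMem {V : Type*} [Fintype V] (G : SimpleGraph V) [DecidableRel G.Adj]
    (Δ : ℕ) (p r : V → ℝ) (v : V) : Prop :=
  dW G p v ≤ Real.sqrt (tauOf Δ) ∧ r v ≤ betaOf Δ * p v

/-- `v ∈ C_i⁺`: `√τ < d_v ≤ ℓ`, `r_v ∈ I_{v,i} = (a_i p_v, a_{i+1} p_v]`, and
`r_u ∈ J_{v,u,i} = (ℓ a_i p_u / d_v, 1]` for every neighbor `u` of `v`. -/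
def CplusMem {V : Type*} [Fintype V] (G : SimpleGraph V) [DecidableRel G.Adj]
    (Δ : ℕ) (p r : V → ℝ) (i : ℕ) (v : V) : Prop :=
  Real.sqrt (tauOf Δ) < dW G p v ∧ dW G p v ≤ ellOf Δ ∧
  r v ∈ Set.Ioc (awP Δ i * p v) (awP Δ (i + 1) * p v) ∧
  ∀ u, G.Adj v u → r u ∈ Set.Ioc (ellOf Δ * (awP Δ i * p u) / dW G p v) 1

/-- `v ∈ C = C⁻ ∪ C₁⁺ ∪ … ∪ C_k⁺`. -/
def CMem {V : Type*} [Fintype V] (G : SimpleGraph V) [DecidableRel G.Adj]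
    (Δ : ℕ) (p r : V → ℝ) (v : V) : Prop :=
  CminusMem G Δ p r v ∨ ∃ i ∈ Finset.Icc 1 (kOf Δ), CplusMem G Δ p r i v

/-- `v ∈ 𝓘`: `v` is a candidate and no neighbor of `v` is a candidate. -/
def ISMem {V : Type*} [Fintype V] (G : SimpleGraph V) [DecidableRel G.Adj]
    (Δ : ℕ) (p r : V → ℝ) (v : V) : Prop :=
  CMem G Δ p r v ∧ ∀ u, G.Adj v u → ¬ CMem G Δ p r u

/-- The ranks are independent and uniform on `[0,1]`: product Lebesgue measure on `[0,1]^V`. -/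
noncomputable def rankMeasure (V : Type*) [Fintype V] : Measure (V → ℝ) :=
  Measure.pi fun _ => (volume : Measure ℝ).restrict (Set.Icc 0 1)


private lemma exp_ge_quarter_sq {x : ℝ} (hx : 0 ≤ x) : x ^ 2 / 4 ≤ Real.exp x := by
  have h1 := Real.add_one_le_exp (x / 2)
  have h2 : Real.exp (x / 2) * Real.exp (x / 2) = Real.exp x := by
    rw [← Real.exp_add]; ring_nf
  nlinarith [Real.exp_pos (x / 2)]

private lemma exp_ge_two_mul (x : ℝ) : 2 * x ≤ Real.exp x := by
  rcases le_or_gt x 0 with h | h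
  · nlinarith [Real.exp_pos x]
  · have h1 := Real.add_one_le_exp (x / 2)
    have h2 : Real.exp (x / 2) * Real.exp (x / 2) = Real.exp x := by
      rw [← Real.exp_add]; ring_nf
    nlinarith [Real.exp_pos (x / 2), sq_nonneg (x / 2 - 1)]

private lemma iterExp_mono (n : ℕ) : Monotone (Real.exp^[n]) := by
  induction n with
  | zero => exact monotone_id
  | succ n ih => rw [Function.iterate_succ']; exact Real.exp_monotone.comp ih

private lemma iterExp_le_succ (n : ℕ) (y : ℝ) : Real.exp^[n] y ≤ Real.exp^[n + 1] y := by
  rw [Function.iterate_succ_apply]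
  exact iterExp_mono n (by linarith [Real.add_one_le_exp y])

private lemma iterExp_le_iterExp (y : ℝ) : Monotone (fun n => Real.exp^[n] y) :=
  monotone_nat_of_le_succ (fun n => iterExp_le_succ n y)

private lemma two_pow_le_iterExp (n : ℕ) : (2 : ℝ) ^ n ≤ Real.exp^[n] 1 := by
  induction n with
  | zero => norm_num
  | succ n ih =>
    rw [Function.iterate_succ_apply', pow_succ]
    calc (2:ℝ) ^ n * 2 = 2 * (2 ^ n) := by ring
    _ ≤ Real.exp (2 ^ n) := exp_ge_two_mul _
    _ ≤ Real.exp (Real.exp^[n] 1) := Real.exp_le_exp.mpr ih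

private lemma iterExp_one_le : ∀ (n : ℕ) (x : ℝ), (∀ m ≤ n, 1 < Real.log^[m] x) → Real.exp^[n] 1 ≤ x := by
  intro n
  induction n with
  | zero => intro x h; exact (h 0 le_rfl).le
  | succ n ih =>
    intro x h
    have hlog : Real.exp^[n] 1 ≤ Real.log x := by
      refine ih (Real.log x) (fun m hm => ?_)
      have := h (m + 1) (by omega)
      rwa [Function.iterate_succ_apply] at this
    have h1 : (1:ℝ) < x := by simpa using h 0 (by omega)
    rw [Function.iterate_succ_apply']
    calc Real.exp (Real.exp^[n] 1) ≤ Real.exp (Real.log x) := Real.exp_le_exp.mpr hlog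
    _ = x := Real.exp_log (by linarith)

private lemma one_sub_ge_exp_neg {c : ℝ} (h0 : 0 ≤ c) (h2 : c ≤ 1 / 2) :
    Real.exp (-(c + 2 * c ^ 2)) ≤ 1 - c := by
  have h3 := Real.add_one_le_exp (c + 2 * c ^ 2)
  have h4 : Real.exp (-(c + 2 * c ^ 2)) * Real.exp (c + 2 * c ^ 2) = 1 := by
    rw [← Real.exp_add]; ring_nf; exact Real.exp_zero
  nlinarith [Real.exp_pos (-(c + 2 * c ^ 2)), Real.exp_pos (c + 2 * c ^ 2)]

section
variable {Δ : ℕ}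

private lemma ell_ge_one (hL : 100 ≤ logStar (1 / tauOf Δ)) : 1 ≤ ellOf Δ := by
  have h1 : (1:ℝ) ≤ (logStar (1 / tauOf Δ) : ℝ) := by
    exact_mod_cast (by omega : 1 ≤ logStar (1 / tauOf Δ))
  exact Real.one_le_rpow h1 (by norm_num)

private lemma ell_pos (hL : 100 ≤ logStar (1 / tauOf Δ)) : 0 < ellOf Δ :=
  lt_of_lt_of_le one_pos (ell_ge_one hL)

private lemma X_zero (hL : 100 ≤ logStar (1 / tauOf Δ)) :
    ellOf Δ * aw Δ 0 = 10 * (logStar (1 / tauOf Δ) : ℝ) := by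
  have h := (ell_pos hL).ne'
  show ellOf Δ * (10 * betaOf Δ) = _
  rw [betaOf]; field_simp

private lemma X_succ (hL : 100 ≤ logStar (1 / tauOf Δ)) (n : ℕ) :
    ellOf Δ * aw Δ (n + 1) = Real.exp (ellOf Δ * aw Δ n) / 16 := by
  have h := (ell_pos hL).ne'
  show ellOf Δ * (Real.exp (ellOf Δ * aw Δ n) / (16 * ellOf Δ)) = _
  field_simp

private lemma X_lb (hL : 100 ≤ logStar (1 / tauOf Δ)) : ∀ n, 1000 ≤ ellOf Δ * aw Δ n := by
  intro n
  induction n with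
  | zero =>
    rw [X_zero hL]
    have : (100 : ℝ) ≤ (logStar (1 / tauOf Δ) : ℝ) := by exact_mod_cast hL
    linarith
  | succ n ih =>
    rw [X_succ hL]
    have h := exp_ge_quarter_sq (x := ellOf Δ * aw Δ n) (by linarith)
    nlinarith

private lemma X_mono (hL : 100 ≤ logStar (1 / tauOf Δ)) :
    Monotone (fun n => ellOf Δ * aw Δ n) := by
  apply monotone_nat_of_le_succ
  intro n
  show ellOf Δ * aw Δ n ≤ ellOf Δ * aw Δ (n + 1)
  rw [X_succ hL]
  have hlb := X_lb hL n
  have h := exp_ge_quarter_sq (x := ellOf Δ * aw Δ n) (by linarith)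
  nlinarith

private lemma X_ub (hL : 100 ≤ logStar (1 / tauOf Δ)) :
    ∀ n, ellOf Δ * aw Δ n ≤ Real.exp^[n] (10 * (logStar (1 / tauOf Δ) : ℝ)) := by
  intro n
  induction n with
  | zero => rw [Function.iterate_zero_apply, X_zero hL]
  | succ n ih =>
    rw [X_succ hL, Function.iterate_succ_apply']
    have := Real.exp_le_exp.mpr ih
    linarith [Real.exp_pos (ellOf Δ * aw Δ n)]

private lemma nat_ineq {L k m : ℕ} (hL : 100 ≤ L) (hk : k = L / 100) (hm : m = L - k - 2) :
    10 * L ≤ 2 ^ m ∧ k + 1 + m = L - 1 ∧ 1 ≤ k := by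
  have h100 : k * 100 ≤ L := hk ▸ Nat.div_mul_le_self L 100
  have hk1 : 1 ≤ k := by subst hk; omega
  have hm97 : 97 ≤ m := by omega
  have h2 : m - 5 < 2 ^ (m - 5) := Nat.lt_two_pow_self
  have h3 : (2:ℕ) ^ m = 2 ^ (m - 5) * 32 := by
    conv_lhs => rw [show m = (m - 5) + 5 by omega]
    rw [pow_add]; norm_num
  refine ⟨by omega, by omega, hk1⟩

private lemma tau_small (hL : 100 ≤ logStar (1 / tauOf Δ)) :
    Real.exp^[kOf Δ + 1] (10 * (logStar (1 / tauOf Δ) : ℝ)) ≤ 1 / tauOf Δ := by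
  obtain ⟨hnat, hsum, hk1⟩ := nat_ineq (L := logStar (1 / tauOf Δ)) (k := kOf Δ)
    (m := logStar (1 / tauOf Δ) - kOf Δ - 2) hL rfl rfl
  have hE : Real.exp^[logStar (1 / tauOf Δ) - 1] 1 ≤ 1 / tauOf Δ := by
    apply iterExp_one_le
    intro j hj
    have hjL : j < logStar (1 / tauOf Δ) := by omega
    have hnm : j ∉ {n : ℕ | Real.log^[n] (1 / tauOf Δ) ≤ 1} :=
      Nat.notMem_of_lt_sInf hjL
    exact lt_of_not_ge (by simpa using hnm)
  calc Real.exp^[kOf Δ + 1] (10 * (logStar (1 / tauOf Δ) : ℝ))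
      ≤ Real.exp^[kOf Δ + 1] (Real.exp^[logStar (1 / tauOf Δ) - kOf Δ - 2] 1) := by
        apply iterExp_mono
        calc (10 : ℝ) * (logStar (1 / tauOf Δ) : ℝ) ≤ 2 ^ (logStar (1 / tauOf Δ) - kOf Δ - 2) := by
              exact_mod_cast hnat
        _ ≤ _ := two_pow_le_iterExp _
    _ = Real.exp^[logStar (1 / tauOf Δ) - 1] 1 := by rw [← Function.iterate_add_apply, hsum]
    _ ≤ 1 / tauOf Δ := hE

end

set_option maxHeartbeats 1600000 in
theorem stmt8 {V : Type*} [Fintype V] [DecidableEq V]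
    (G : SimpleGraph V) [DecidableRel G.Adj] (Δ : ℕ)
    (hτ0 : 0 < tauOf Δ) (hτ1 : tauOf Δ ≤ 1 / 2)
    (hdeg : ∀ v, G.degree v ≤ Δ) (htri : G.CliqueFree 3)
    (p : V → ℝ) (hp : ∀ v, 0 ≤ p v ∧ p v ≤ tauOf Δ)
    (v : V) (hv1 : Real.sqrt (tauOf Δ) < dW G p v) (hv2 : dW G p v ≤ ellOf Δ)
    (i : ℕ) (hi : i ∈ Finset.Icc 1 (kOf Δ)) :
    ENNReal.ofReal (p v / (96 * ellOf Δ)) ≤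
      rankMeasure V {r | CplusMem G Δ p r i v} := by
  obtain ⟨hi1, hik⟩ := Finset.mem_Icc.mp hi
  have hL : 100 ≤ logStar (1 / tauOf Δ) := by
    have h1 : 1 ≤ kOf Δ := le_trans hi1 hik
    rw [kOf] at h1; omega
  obtain ⟨j, rfl⟩ : ∃ j, i = j + 1 := ⟨i - 1, by omega⟩
  have hℓ1 : 1 ≤ ellOf Δ := ell_ge_one hL
  have hℓ0 : 0 < ellOf Δ := ell_pos hL
  have hd0 : 0 < dW G p v := lt_of_le_of_lt (Real.sqrt_nonneg _) hv1
  set τ := tauOf Δ with hτdef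
  set s := Real.sqrt τ with hsdef
  have hs0 : 0 ≤ s := Real.sqrt_nonneg _
  have hss : s * s = τ := Real.mul_self_sqrt hτ0.le
  set ℓ := ellOf Δ with hℓdef
  set d := dW G p v with hddef
  set X := ℓ * aw Δ j with hXdef
  have hX1000 : 1000 ≤ X := X_lb hL j
  have hawpos : ∀ n, 0 < aw Δ n := by
    intro n
    have h := X_lb hL n
    by_contra hc
    push_neg at hc
    nlinarith [mul_nonneg hℓ0.le (neg_nonneg.mpr hc)]
  -- Upper bounds coming from tau_small
  have htau := tau_small hL
  set L : ℕ := logStar (1 / tauOf Δ) with hLdef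
  -- F1 : aw Δ (j+1) * τ ≤ 1
  have hawk : aw Δ (j + 1) ≤ 1 / τ := by
    have h1 : aw Δ (j + 1) ≤ ℓ * aw Δ (j + 1) := le_mul_of_one_le_left (hawpos _).le hℓ1
    have h2 : ℓ * aw Δ (j + 1) ≤ Real.exp^[j + 1] (10 * (L : ℝ)) := X_ub hL (j + 1)
    have h3 : Real.exp^[j + 1] (10 * (L : ℝ)) ≤ Real.exp^[kOf Δ + 1] (10 * (L : ℝ)) :=
      iterExp_le_iterExp _ (by omega)
    linarith
  have hF1 : aw Δ (j + 1) * p v ≤ 1 := by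
    have h4 : aw Δ (j + 1) * τ ≤ 1 := by
      rw [le_div_iff₀ hτ0] at hawk
      linarith [hawk]
    have := (hp v).2
    nlinarith [(hawpos (j + 1)).le, (hp v).1]
  -- F2 : 2 * X^2 * s ≤ 1
  have hF2 : 2 * X ^ 2 * s ≤ 1 := by
    set Y := Real.exp^[j] (10 * (L : ℝ)) with hYdef
    have hXY : X ≤ Y := X_ub hL j
    have hY1000 : (1000 : ℝ) ≤ Y := le_trans hX1000 hXY
    have hYexp : Real.exp Y ≥ Y ^ 2 / 4 := exp_ge_quarter_sq (by linarith)
    have h8Y : 8 * Y ≤ Real.exp Y := by nlinarith [mul_nonneg (by linarith : (0:ℝ) ≤ Y) (by linarith : (0:ℝ) ≤ Y - 32)]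
    have hY4 : 4 * Y ^ 4 ≤ Real.exp (Real.exp Y) := by
      have h1 : Y ^ 8 ≤ Real.exp Y ^ 8 :=
        pow_le_pow_left₀ (by linarith) (by linarith [Real.add_one_le_exp Y]) 8
      have h2 : Real.exp Y ^ 8 = Real.exp (8 * Y) := by
        rw [← Real.exp_nat_mul]; norm_num
      have h3 : Real.exp (8 * Y) ≤ Real.exp (Real.exp Y) := Real.exp_le_exp.mpr h8Y
      have hp4 : (4:ℝ) ≤ Y ^ 4 := by
        nlinarith [pow_le_pow_left₀ (by norm_num : (0:ℝ) ≤ 1000) hY1000 4]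
      have hY8 : 4 * Y ^ 4 ≤ Y ^ 8 := by
        nlinarith [mul_nonneg (sub_nonneg.mpr hp4) (pow_nonneg (by linarith : (0:ℝ) ≤ Y) 4)]
      linarith
    have hiter : Real.exp (Real.exp Y) ≤ 1 / τ := by
      have e1 : Real.exp (Real.exp Y) = Real.exp^[j + 2] (10 * (L : ℝ)) := by
        rw [Function.iterate_succ_apply', Function.iterate_succ_apply', hYdef]
      rw [e1]
      exact le_trans (iterExp_le_iterExp _ (by omega)) htau
    have hY4τ : 4 * Y ^ 4 * τ ≤ 1 := by
      have h5 := (le_div_iff₀ hτ0).mp hiter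
      nlinarith [mul_nonneg (sub_nonneg.mpr hY4) hτ0.le]
    have hX4 : X ^ 4 ≤ Y ^ 4 := pow_le_pow_left₀ (by linarith) hXY 4
    have hsq : (2 * X ^ 2 * s) ^ 2 ≤ 1 := by
      have : (2 * X ^ 2 * s) ^ 2 = 4 * X ^ 4 * (s * s) := by ring
      rw [this, hss]
      nlinarith [mul_nonneg (sub_nonneg.mpr hX4) hτ0.le]
    nlinarith [sq_nonneg (2 * X ^ 2 * s - 1), mul_nonneg (mul_nonneg (by norm_num : (0:ℝ) ≤ 2) (sq_nonneg X)) hs0]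
  -- per neighbor quantities
  have hcf_nonneg : ∀ u, 0 ≤ ℓ * (aw Δ j * p u) / d := by
    intro u
    apply div_nonneg _ hd0.le
    exact mul_nonneg hℓ0.le (mul_nonneg (hawpos j).le (hp u).1)
  have hcf_le : ∀ u, ℓ * (aw Δ j * p u) / d ≤ X * s := by
    intro u
    rw [div_le_iff₀ hd0]
    have h1 : p u ≤ s * s := by rw [hss]; exact (hp u).2
    have h2 : s < d := hv1
    have hX0 : (0:ℝ) ≤ X := by linarith
    calc ℓ * (aw Δ j * p u) = X * p u := by rw [hXdef]; ring
    _ ≤ X * (s * s) := by nlinarith [mul_nonneg hX0 (sub_nonneg.mpr h1)]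
    _ ≤ X * (s * d) := by nlinarith [mul_nonneg (mul_nonneg hX0 hs0) (by linarith : (0:ℝ) ≤ d - s)]
    _ = X * s * d := by ring
  have hXs_half : X * s ≤ 1 / 2 := by
    nlinarith [mul_nonneg (mul_nonneg (by linarith : (0:ℝ) ≤ X) hs0) (by linarith : (0:ℝ) ≤ X - 1)]
  have hcf_half : ∀ u, ℓ * (aw Δ j * p u) / d ≤ 1 / 2 :=
    fun u => le_trans (hcf_le u) hXs_half
  -- sum of cf over neighbors equals X
  have hsum : ∑ u ∈ G.neighborFinset v, ℓ * (aw Δ j * p u) / d = X := by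
    rw [← Finset.sum_div]
    rw [Finset.sum_congr rfl (fun u _ => by ring : ∀ u ∈ G.neighborFinset v,
      ℓ * (aw Δ j * p u) = (ℓ * aw Δ j) * p u), ← Finset.mul_sum]
    have : ∑ u ∈ G.neighborFinset v, p u = d := rfl
    rw [this, hXdef, mul_div_assoc, div_self hd0.ne', mul_one]
  -- product lower bound
  have hprodlb : Real.exp (-(X + 1)) ≤ ∏ u ∈ G.neighborFinset v, (1 - ℓ * (aw Δ j * p u) / d) := by
    have hstep : ∏ u ∈ G.neighborFinset v, Real.exp (-(ℓ * (aw Δ j * p u) / d + 2 * (ℓ * (aw Δ j * p u) / d) ^ 2))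
        ≤ ∏ u ∈ G.neighborFinset v, (1 - ℓ * (aw Δ j * p u) / d) := by
      apply Finset.prod_le_prod
      · intro u _; exact (Real.exp_pos _).le
      · intro u _; exact one_sub_ge_exp_neg (hcf_nonneg u) (hcf_half u)
    refine le_trans ?_ hstep
    rw [← Real.exp_sum]
    apply Real.exp_le_exp.mpr
    have hsq : ∑ u ∈ G.neighborFinset v, (ℓ * (aw Δ j * p u) / d) ^ 2 ≤ 1 / 2 := by
      have h1 : ∀ u ∈ G.neighborFinset v, (ℓ * (aw Δ j * p u) / d) ^ 2 ≤ (X * s) * (ℓ * (aw Δ j * p u) / d) := by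
        intro u _
        have := hcf_le u
        have := hcf_nonneg u
        nlinarith
      calc ∑ u ∈ G.neighborFinset v, (ℓ * (aw Δ j * p u) / d) ^ 2
          ≤ ∑ u ∈ G.neighborFinset v, (X * s) * (ℓ * (aw Δ j * p u) / d) := Finset.sum_le_sum h1
        _ = (X * s) * X := by rw [← Finset.mul_sum, hsum]
        _ ≤ 1 / 2 := by nlinarith [hs0, sq_nonneg X]
    have hsplit : ∑ u ∈ G.neighborFinset v, -(ℓ * (aw Δ j * p u) / d + 2 * (ℓ * (aw Δ j * p u) / d) ^ 2)
        = -((∑ u ∈ G.neighborFinset v, ℓ * (aw Δ j * p u) / d)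
            + 2 * ∑ u ∈ G.neighborFinset v, (ℓ * (aw Δ j * p u) / d) ^ 2) := by
      rw [Finset.mul_sum, ← Finset.sum_add_distrib, ← Finset.sum_neg_distrib]
    rw [hsplit, hsum]
    linarith
  -- interval length lower bound
  have hIv : Real.exp X / (32 * ℓ) ≤ aw Δ (j + 1) - aw Δ j := by
    have hexp32 : 32 * X ≤ Real.exp X := by
      have := exp_ge_quarter_sq (x := X) (by linarith)
      nlinarith
    have hawj1 : aw Δ (j + 1) = Real.exp X / (16 * ℓ) := by
      show Real.exp (ℓ * aw Δ j) / (16 * ℓ) = _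
      rw [hXdef]
    have hawj : aw Δ j = X / ℓ := by rw [hXdef]; field_simp
    rw [hawj1, hawj]
    have heq : Real.exp X / (16 * ℓ) - X / ℓ - Real.exp X / (32 * ℓ)
        = (Real.exp X - 32 * X) / (32 * ℓ) := by field_simp; ring
    have hge : (0:ℝ) ≤ (Real.exp X - 32 * X) / (32 * ℓ) :=
      div_nonneg (by linarith) (by linarith)
    linarith
  -- key real inequality
  have hprod_nonneg : (0:ℝ) ≤ ∏ u ∈ G.neighborFinset v, (1 - ℓ * (aw Δ j * p u) / d) :=
    le_trans (Real.exp_pos _).le hprodlb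
  have key : p v / (96 * ℓ) ≤ (aw Δ (j + 1) * p v - aw Δ j * p v) *
      ∏ u ∈ G.neighborFinset v, (1 - ℓ * (aw Δ j * p u) / d) := by
    have e1 : aw Δ (j + 1) * p v - aw Δ j * p v = (aw Δ (j + 1) - aw Δ j) * p v := by ring
    rw [e1]
    have hpv0 := (hp v).1
    have h1 : Real.exp X / (32 * ℓ) * p v * Real.exp (-(X + 1))
        ≤ (aw Δ (j + 1) - aw Δ j) * p v *
          ∏ u ∈ G.neighborFinset v, (1 - ℓ * (aw Δ j * p u) / d) := by
      apply mul_le_mul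
      · exact mul_le_mul_of_nonneg_right hIv hpv0
      · exact hprodlb
      · exact (Real.exp_pos _).le
      · exact mul_nonneg (le_trans (div_nonneg (Real.exp_pos X).le
          (by linarith : (0:ℝ) ≤ 32 * ℓ)) hIv) hpv0
    refine le_trans ?_ h1
    have e2 : Real.exp X / (32 * ℓ) * p v * Real.exp (-(X + 1))
        = p v * (Real.exp X * Real.exp (-(X + 1))) / (32 * ℓ) := by ring
    have e3 : Real.exp X * Real.exp (-(X + 1)) = Real.exp (-1) := by
      rw [← Real.exp_add]; congr 1; ring
    rw [e2, e3]
    have hexp3 : (1:ℝ) / 3 ≤ Real.exp (-1) := by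
      rw [Real.exp_neg]
      have h3 : Real.exp 1 ≤ 3 := by linarith [Real.exp_one_lt_d9]
      have hinv : Real.exp 1 * (Real.exp 1)⁻¹ = 1 := mul_inv_cancel₀ (Real.exp_pos 1).ne'
      nlinarith [mul_nonneg (sub_nonneg.mpr h3) (inv_nonneg.mpr (Real.exp_pos 1).le)]
    rw [div_le_div_iff₀ (by linarith) (by linarith)]
    nlinarith [mul_nonneg (by linarith : (0:ℝ) ≤ 96 * Real.exp (-1) - 32)
      (mul_nonneg hpv0 (by linarith : (0:ℝ) ≤ ℓ))]
  -- nonnegativity facts for the measure computation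
  have hA0 : 0 ≤ aw Δ j * p v := mul_nonneg (hawpos j).le (hp v).1
  have hAB : aw Δ j * p v ≤ aw Δ (j + 1) * p v := by
    have := hIv
    have := Real.exp_pos X
    nlinarith [(hp v).1, div_pos (Real.exp_pos X) (show (0:ℝ) < 32 * ℓ by linarith)]
  -- the event as a product set
  have hset : {r : V → ℝ | CplusMem G Δ p r (j + 1) v} = Set.univ.pi
      (fun w => if w = v then Set.Ioc (aw Δ j * p v) (aw Δ (j + 1) * p v)
        else if G.Adj v w then Set.Ioc (ℓ * (aw Δ j * p w) / d) 1 else Set.univ) := by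
    ext r
    simp only [Set.mem_setOf_eq, Set.mem_pi, Set.mem_univ, true_implies]
    constructor
    · rintro ⟨-, -, hrv, hru⟩ w
      by_cases hw : w = v
      · subst hw; rw [if_pos rfl]; exact hrv
      · rw [if_neg hw]
        by_cases ha : G.Adj v w
        · rw [if_pos ha]; exact hru w ha
        · rw [if_neg ha]; trivial
    · intro h
      refine ⟨hv1, hv2, ?_, ?_⟩
      · have := h v; rwa [if_pos rfl] at this
      · intro u hu
        have hne : u ≠ v := fun he => G.irrefl (he ▸ hu)
        have := h u
        rwa [if_neg hne, if_pos hu] at this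
  rw [hset, show rankMeasure V = Measure.pi fun _ : V => (volume : Measure ℝ).restrict (Set.Icc 0 1) from rfl,
    Measure.pi_pi]
  have hmuIoc : ∀ a b : ℝ, 0 ≤ a → b ≤ 1 →
      (volume : Measure ℝ).restrict (Set.Icc 0 1) (Set.Ioc a b) = ENNReal.ofReal (b - a) := by
    intro a b ha hb
    have hsub : Set.Ioc a b ⊆ Set.Icc 0 1 :=
      fun x hx => ⟨le_of_lt (lt_of_le_of_lt ha hx.1), hx.2.trans hb⟩
    rw [Measure.restrict_apply measurableSet_Ioc, Set.inter_eq_left.mpr hsub, Real.volume_Ioc]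
  have hout : ∀ w ∈ Finset.univ, w ∉ insert v (G.neighborFinset v) →
      (volume : Measure ℝ).restrict (Set.Icc 0 1)
        (if w = v then Set.Ioc (aw Δ j * p v) (aw Δ (j + 1) * p v)
          else if G.Adj v w then Set.Ioc (ℓ * (aw Δ j * p w) / d) 1 else Set.univ) = 1 := by
    intro w _ hw
    simp only [Finset.mem_insert, SimpleGraph.mem_neighborFinset] at hw
    push_neg at hw
    rw [if_neg hw.1, if_neg hw.2]
    simp [Measure.restrict_apply_univ, Real.volume_Icc]
  rw [← Finset.prod_subset (Finset.subset_univ (insert v (G.neighborFinset v))) hout,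
    Finset.prod_insert (by simp)]
  have hfv : (volume : Measure ℝ).restrict (Set.Icc 0 1)
      (if v = v then Set.Ioc (aw Δ j * p v) (aw Δ (j + 1) * p v)
        else if G.Adj v v then Set.Ioc (ℓ * (aw Δ j * p v) / d) 1 else Set.univ)
      = ENNReal.ofReal (aw Δ (j + 1) * p v - aw Δ j * p v) := by
    rw [if_pos rfl]
    exact hmuIoc _ _ hA0 hF1
  have hfn : ∀ u ∈ G.neighborFinset v, (volume : Measure ℝ).restrict (Set.Icc 0 1)
      (if u = v then Set.Ioc (aw Δ j * p v) (aw Δ (j + 1) * p v)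
        else if G.Adj v u then Set.Ioc (ℓ * (aw Δ j * p u) / d) 1 else Set.univ)
      = ENNReal.ofReal (1 - ℓ * (aw Δ j * p u) / d) := by
    intro u hu
    have hadj : G.Adj v u := by rwa [SimpleGraph.mem_neighborFinset] at hu
    have hne : u ≠ v := fun he => G.irrefl (he ▸ hadj)
    rw [if_neg hne, if_pos hadj]
    have h1 := hmuIoc (ℓ * (aw Δ j * p u) / d) 1 (hcf_nonneg u) le_rfl
    rw [h1]
  rw [hfv, Finset.prod_congr rfl hfn]
  rw [← ENNReal.ofReal_prod_of_nonneg (fun u _ => by linarith [hcf_half u])]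
  rw [← ENNReal.ofReal_mul (by nlinarith [(hp v).1] : (0:ℝ) ≤ aw Δ (j + 1) * p v - aw Δ j * p v)]
  exact ENNReal.ofReal_le_ofReal key
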